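/- Let f : ℕ → ℕ and define β_h := e·f(h)/h − 1, and suppose β_h → 0 as h → ∞. If log h − 2·h·β_h → ∞ as h → ∞, then θ_1(f(h), h) → 0 as h → ∞. -/

import Mathlib

open MeasureTheory Filter

/-- A vertex of the complete `n`-ary tree of height `h`: at depth `i ≤ h`,
a vertex is a word of length `i` over an alphabet of size `n`. -/
abbrev TreeVertex (n h : ℕ) : Type := (i : Fin (h + 1)) × (Fin i.val → Fin n)

/-- The vertex at depth `i` on the root-to-leaf path determined by `leaf`:
the length-`i` prefix of `leaf`. -/
def pathVertex {n h : ℕ} (leaf : Fin h → Fin n) (i : Fin (h + 1)) : TreeVertex n h :=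
  ⟨i, fun j => leaf ⟨j.val, lt_of_lt_of_le j.isLt (Nat.lt_succ_iff.mp i.isLt)⟩⟩

/-- The event (set of labelings `ω` of the vertices) that some root-to-leaf path of
the complete `n`-ary tree of height `h` is `k`-accessible: there is a leaf and
indices `0 = r 0 < r 1 < ⋯ < r t = h` with consecutive gaps at most `k` along which
the labels are strictly increasing. -/
def kAccessibleEvent (k n h : ℕ) : Set (TreeVertex n h → ℝ) :=
  {ω | ∃ leaf : Fin h → Fin n, ∃ t : ℕ, ∃ r : Fin (t + 1) → Fin (h + 1),
    StrictMono r ∧ r 0 = 0 ∧ r (Fin.last t) = Fin.last h ∧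
    (∀ i : Fin t, (r i.succ).val ≤ (r i.castSucc).val + k) ∧
    StrictMono fun i => ω (pathVertex leaf (r i))}

/-- The vertices are labelled by i.i.d. Uniform[0,1] random variables: the product
over all vertices of Lebesgue measure restricted to `[0,1]`. -/
noncomputable def treeLabelMeasure (n h : ℕ) : Measure (TreeVertex n h → ℝ) :=
  Measure.pi fun _ => (volume : Measure ℝ).restrict (Set.Icc 0 1)

/-- `theta k n h` is the probability that the labelled complete `n`-ary tree of
height `h` contains a `k`-accessible root-to-leaf path. -/
noncomputable def theta (k n h : ℕ) : ℝ :=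
  (treeLabelMeasure n h (kAccessibleEvent k n h)).toReal

/-!
A `1`-accessible path must visit every depth, so it is one of the `n ^ h` root-to-leaf paths with
increasing labels. The labels of the `h + 1` distinct vertices of a fixed path are i.i.d., so
their `(h + 1)!` relative orders are equally likely and at most one is increasing: the union bound
gives `θ₁(n, h) ≤ n ^ h / (h + 1)!`. Writing `n = (1 + β) h / e` and using `h ^ h / h! ≤ e ^ h`
and `1 + β ≤ e ^ β`, this is at most `exp (h β - log h)`, which tends to `0` because
`2 (log h - h β) = (log h - 2 h β) + log h → ∞`.
-/

open Function
open scoped ENNReal Nat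

instance : IsProbabilityMeasure ((volume : Measure ℝ).restrict (Set.Icc 0 1)) :=
  ⟨by simp⟩

instance (n h : ℕ) : IsProbabilityMeasure (treeLabelMeasure n h) := by
  unfold treeLabelMeasure
  infer_instance

theorem Tuple.eq_sort_of_strictMono_comp {α : Type*} [LinearOrder α] {m : ℕ} {g : Fin m → α}
    {σ : Equiv.Perm (Fin m)} (hσ : StrictMono (g ∘ σ)) : σ = Tuple.sort g :=
  Tuple.eq_sort_iff.2 ⟨hσ.monotone, fun _ _ hij heq => absurd heq (hσ hij).ne⟩

section StrictMonoCoordinates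

variable {ι α : Type*} [MeasurableSpace α]

theorem measurePreserving_comp_perm [Fintype ι] (ν : Measure α) [SigmaFinite ν]
    (e : Equiv.Perm ι) :
    MeasurePreserving (fun ω : ι → α => ω ∘ e) (Measure.pi fun _ => ν) (Measure.pi fun _ => ν) :=
  measurePreserving_arrowCongr' (fun _ => ν) (fun _ => ν) e.symm (MeasurableEquiv.refl α)
    fun _ => MeasurePreserving.id ν

variable [LinearOrder α] [TopologicalSpace α] [OrderClosedTopology α] [SecondCountableTopology α]
  [OpensMeasurableSpace α] {m : ℕ}

theorem measurableSet_setOf_strictMono_comp (q : Fin m → ι) :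
    MeasurableSet {ω : ι → α | StrictMono (ω ∘ q)} := by
  have : {ω : ι → α | StrictMono (ω ∘ q)} =
      ⋂ (i) (j) (_ : i < j), {ω | ω (q i) < ω (q j)} := by
    ext
    simp [StrictMono]
  rw [this]
  exact .iInter fun i => .iInter fun j => .iInter fun _ =>
    measurableSet_lt (measurable_pi_apply _) (measurable_pi_apply _)

variable [Fintype ι]

theorem measure_setOf_strictMono_comp_perm (ν : Measure α) [SigmaFinite ν] {q : Fin m → ι}
    (hq : Injective q) (σ : Equiv.Perm (Fin m)) :
    Measure.pi (fun _ => ν) {ω : ι → α | StrictMono (ω ∘ q ∘ σ)} =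
      Measure.pi (fun _ => ν) {ω : ι → α | StrictMono (ω ∘ q)} := by
  classical
  set e : Equiv.Perm ι := σ.extendDomain (Equiv.ofInjective q hq)
  have he : e ∘ q = q ∘ σ := funext fun i => by
    simpa using σ.extendDomain_apply_image (Equiv.ofInjective q hq) i
  have hpre : {ω : ι → α | StrictMono (ω ∘ q ∘ σ)} =
      (fun ω => ω ∘ e) ⁻¹' {ω | StrictMono (ω ∘ q)} := by
    ext ω
    simp only [Set.mem_ofPred_eq, Set.mem_preimage, comp_assoc, he]
  rw [hpre, (measurePreserving_comp_perm ν e).measure_preimage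
    (measurableSet_setOf_strictMono_comp q).nullMeasurableSet]

theorem measure_setOf_strictMono_comp_le (ν : Measure α) [IsProbabilityMeasure ν] {q : Fin m → ι}
    (hq : Injective q) :
    Measure.pi (fun _ => ν) {ω : ι → α | StrictMono (ω ∘ q)} ≤ (m ! : ℝ≥0∞)⁻¹ := by
  set μ := Measure.pi fun _ : ι => ν
  set S := fun σ : Equiv.Perm (Fin m) => {ω : ι → α | StrictMono (ω ∘ q ∘ σ)}
  -- only the sorting permutation of `ω ∘ q` can make it increasing
  have hdisj : Pairwise (Disjoint on S) := fun σ τ hne =>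
    Set.disjoint_left.2 fun ω hσ hτ => hne <|
      (Tuple.eq_sort_of_strictMono_comp (g := ω ∘ q) hσ).trans
        (Tuple.eq_sort_of_strictMono_comp (g := ω ∘ q) hτ).symm
  have hunion : μ (⋃ σ, S σ) = m ! * μ {ω | StrictMono (ω ∘ q)} := by
    rw [measure_iUnion hdisj fun σ => measurableSet_setOf_strictMono_comp (q ∘ σ), tsum_fintype]
    simp [S, μ, measure_setOf_strictMono_comp_perm ν hq, Fintype.card_perm]
  rw [ENNReal.le_inv_iff_mul_le, mul_comm, ← hunion]
  exact prob_le_one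

end StrictMonoCoordinates

theorem Fin.val_eq_of_strictMono_of_le_succ {t h : ℕ} {r : Fin (t + 1) → Fin (h + 1)}
    (hmono : StrictMono r) (hr0 : r 0 = 0)
    (hstep : ∀ i : Fin t, (r i.succ).val ≤ (r i.castSucc).val + 1) (i : Fin (t + 1)) :
    (r i).val = i.val := by
  induction i using Fin.induction with
  | zero => simp [hr0]
  | succ i ih =>
    have hlt := hmono i.castSucc_lt_succ
    have hle := hstep i
    simp only [Fin.val_succ, Fin.val_castSucc, Fin.lt_def] at hlt hle ih ⊢
    omega

theorem kAccessibleEvent_one_subset (n h : ℕ) :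
    kAccessibleEvent 1 n h ⊆
      ⋃ leaf : Fin h → Fin n, {ω | StrictMono (ω ∘ pathVertex leaf)} := by
  rintro ω ⟨leaf, t, r, hmono, hr0, hlast, hstep, hω⟩
  have hval := Fin.val_eq_of_strictMono_of_le_succ hmono hr0 hstep
  obtain rfl : t = h := by simpa [hlast] using (hval (Fin.last t)).symm
  obtain rfl : r = id := funext fun i => Fin.ext (hval i)
  exact Set.mem_iUnion.2 ⟨leaf, hω⟩

theorem theta_one_le_pow_div_factorial (n h : ℕ) :
    theta 1 n h ≤ (n : ℝ) ^ h / (h + 1)! := by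
  have hpaths : treeLabelMeasure n h (kAccessibleEvent 1 n h) ≤ n ^ h * ((h + 1)! : ℝ≥0∞)⁻¹ :=
    calc treeLabelMeasure n h (kAccessibleEvent 1 n h)
        ≤ ∑' leaf : Fin h → Fin n,
            treeLabelMeasure n h {ω | StrictMono (ω ∘ pathVertex leaf)} :=
          (measure_mono (kAccessibleEvent_one_subset n h)).trans (measure_iUnion_le _)
      _ ≤ ∑' _ : Fin h → Fin n, ((h + 1)! : ℝ≥0∞)⁻¹ :=
          ENNReal.tsum_le_tsum fun leaf => measure_setOf_strictMono_comp_le _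
            fun _ _ hij => congrArg Sigma.fst hij
      _ = n ^ h * ((h + 1)! : ℝ≥0∞)⁻¹ := by simp
  have hfin : (n : ℝ≥0∞) ^ h * ((h + 1)! : ℝ≥0∞)⁻¹ ≠ ⊤ :=
    ENNReal.mul_ne_top (by simp) (by simp [Nat.factorial_ne_zero])
  simpa [theta, div_eq_mul_inv] using ENNReal.toReal_mono hfin hpaths

theorem pow_div_factorial_le_exp_mul {x : ℝ} (hx : 0 ≤ x) (h : ℕ) :
    x ^ h / h ! ≤ Real.exp (h * (Real.exp 1 * x / h - 1)) := by
  rcases Nat.eq_zero_or_pos h with rfl | hh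
  · simp
  have hh' : (0 : ℝ) < h := by exact_mod_cast hh
  set y := Real.exp 1 * x / h
  calc x ^ h / h ! = y ^ h * ((h : ℝ) ^ h / h !) / Real.exp 1 ^ h := by
        rw [div_pow, mul_pow]; field_simp
    _ ≤ y ^ h * Real.exp h / Real.exp 1 ^ h := by
        gcongr; exact Real.pow_div_factorial_le_exp _ hh'.le h
    _ = y ^ h := by rw [Real.exp_one_pow]; field_simp
    _ ≤ Real.exp (y - 1) ^ h := by gcongr; linarith [Real.add_one_le_exp (y - 1)]
    _ = Real.exp (h * (y - 1)) := (Real.exp_nat_mul _ h).symm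

theorem theta_one_le_exp (n : ℕ) {h : ℕ} (hh : 0 < h) :
    theta 1 n h ≤ Real.exp (h * (Real.exp 1 * n / h - 1) - Real.log h) := by
  have hh' : (0 : ℝ) < h := by exact_mod_cast hh
  calc theta 1 n h ≤ (n : ℝ) ^ h / (h + 1)! := theta_one_le_pow_div_factorial n h
    _ = (n : ℝ) ^ h / h ! / (h + 1) := by
        rw [Nat.factorial_succ, Nat.cast_mul, Nat.cast_succ, div_div, mul_comm]
    _ ≤ Real.exp (h * (Real.exp 1 * n / h - 1)) / h := by
        gcongr
        · exact pow_div_factorial_le_exp_mul n.cast_nonneg h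
        · linarith
    _ = _ := by rw [Real.exp_sub, Real.exp_log hh']

theorem theta_one_tendsto_zero_of_beta_general
    (f : ℕ → ℕ) (β : ℕ → ℝ)
    (hβ : ∀ h : ℕ, β h = Real.exp 1 * (f h : ℝ) / (h : ℝ) - 1)
    (h1 : Tendsto (fun h : ℕ => Real.log h - 2 * (h : ℝ) * β h) atTop atTop) :
    Tendsto (fun h : ℕ => theta 1 (f h) h) atTop (nhds 0) := by
  have hexponent : Tendsto (fun h : ℕ => h * β h - Real.log h) atTop atBot := by
    have hlog := Real.tendsto_log_atTop.comp tendsto_natCast_atTop_atTop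
    refine (tendsto_neg_atBot_iff.2 ((h1.atTop_add_atTop hlog).atTop_div_const two_pos)).congr
      fun h => ?_
    simp only [comp_apply]
    ring
  refine squeeze_zero' (.of_forall fun _ => ENNReal.toReal_nonneg) ?_
    (Real.tendsto_exp_atBot.comp hexponent)
  filter_upwards [eventually_gt_atTop 0] with h hh
  rw [comp_apply, hβ]
  exact theta_one_le_exp (f h) hh

theorem theta_one_tendsto_zero_of_beta
    (f : ℕ → ℕ) (β : ℕ → ℝ)
    (hβ : ∀ h : ℕ, β h = Real.exp 1 * (f h : ℝ) / (h : ℝ) - 1)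
    (hβ0 : Tendsto β atTop (nhds 0))
    (h1 : Tendsto (fun h : ℕ => Real.log h - 2 * (h : ℝ) * β h) atTop atTop) :
    Tendsto (fun h : ℕ => theta 1 (f h) h) atTop (nhds 0) :=
  theta_one_tendsto_zero_of_beta_general f β hβ h1
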